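/- arXiv:1705.07343 — 11 statements merged into one kernel-verified Lean document; each statement's English description precedes it below -/
import Mathlib

section
/- In the shareable goods game (SGG) on a finite graph G with parameter k, a strategy profile s : V → {0,1} is a Nash equilibrium if and only if the set of buyers {i : s_i = 1} is a k-independent dominating set of G. -/
/-!
A player's best response depends only on whether some *other* buyer lies within distance `k`:
since `0 < p < b`, buying pays `b - p`, which beats the `0` of being uncovered and loses to the
free `b` of being covered. So `s` is an equilibrium iff the buyers are exactly the vertices with no
other buyer within distance `k`, and that fixed-point condition is a reformulation of `k`-independent
domination.
-/

open Function

open Classical in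
/-- Utility of player `i` in the shareable goods game (SGG) on graph `G`
with hop parameter `k`, benefit `b` and price `p`. -/
noncomputable def utilSGG {V : Type} (G : SimpleGraph V) (k : ℕ) (b p : ℚ)
    (s : V → Bool) (i : V) : ℚ :=
  if s i then b - p
  else if ∃ j, s j ∧ G.edist i j ≤ (k : ℕ∞) then b
  else 0

namespace SimpleGraph

variable {V : Type} (G : SimpleGraph V) (k : ℕ)

def IsKIndepDominating (D : Set V) : Prop :=
  (∀ v, ∃ d ∈ D, G.edist v d ≤ k) ∧ ∀ d d', d ∈ D → d' ∈ D → d ≠ d' → (k : ℕ∞) + 1 ≤ G.edist d d'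

theorem isKIndepDominating_iff {D : Set V} :
    G.IsKIndepDominating k D ↔ ∀ v, v ∈ D ↔ ¬∃ d ∈ D, d ≠ v ∧ G.edist v d ≤ k := by
  simp only [IsKIndepDominating, ENat.add_one_le_iff (ENat.natCast_ne_top k), ← not_le]
  constructor
  · rintro ⟨hdom, hind⟩ v
    refine ⟨fun hv ⟨d, hd, hne, hvd⟩ ↦ hind v d hv hd hne.symm hvd, fun hv ↦ ?_⟩
    by_contra hvD
    obtain ⟨d, hd, hvd⟩ := hdom v
    exact hv ⟨d, hd, fun h ↦ hvD (h ▸ hd), hvd⟩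
  · intro h
    refine ⟨fun v ↦ ?_, fun d d' hd hd' hne hdd' ↦ (h d).1 hd ⟨d', hd', hne.symm, hdd'⟩⟩
    by_cases hv : v ∈ D
    · exact ⟨v, hv, by simp⟩
    · obtain ⟨d, hd, -, hvd⟩ := not_not.1 (mt (h v).2 hv)
      exact ⟨d, hd, hvd⟩

end SimpleGraph

section SGG

variable {V : Type} [DecidableEq V] (G : SimpleGraph V) (k : ℕ) (b p : ℚ) (s : V → Bool) (i : V)

theorem utilSGG_update_self_true : utilSGG G k b p (update s i true) i = b - p := by
  simp [utilSGG]

open Classical in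
theorem utilSGG_update_self_false :
    utilSGG G k b p (update s i false) i =
      if ∃ j, s j = true ∧ j ≠ i ∧ G.edist i j ≤ k then b else 0 := by
  have hbuyers : (∃ j, update s i false j = true ∧ G.edist i j ≤ k) ↔
      ∃ j, s j = true ∧ j ≠ i ∧ G.edist i j ≤ k := by
    refine exists_congr fun j ↦ ?_
    by_cases hj : j = i <;> simp [hj]
  simp only [utilSGG, update_self, Bool.false_eq_true, if_false, hbuyers]

theorem forall_utilSGG_update_le_iff (hp : 0 < p) (hb : p < b) :
    (∀ c, utilSGG G k b p (update s i c) i ≤ utilSGG G k b p s i) ↔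
      (s i = true ↔ ¬∃ j, s j = true ∧ j ≠ i ∧ G.edist i j ≤ k) := by
  have hself : utilSGG G k b p s i = utilSGG G k b p (update s i (s i)) i := by
    rw [update_eq_self]
  rw [Bool.forall_bool, hself]
  cases s i <;>
    simp only [utilSGG_update_self_true, utilSGG_update_self_false] <;>
    split_ifs with hcovered <;> simp [hcovered] <;> linarith

end SGG

theorem sgg_NE_iff_kIndepDomSet_general {V : Type} [DecidableEq V]
    (G : SimpleGraph V) (k : ℕ) (b p : ℚ) (hp : 0 < p) (hb : p < b)
    (s : V → Bool) :
    (∀ i : V, ∀ c : Bool,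
        utilSGG G k b p (Function.update s i c) i ≤ utilSGG G k b p s i) ↔
      ((∀ v : V, ∃ d, s d = true ∧ G.edist v d ≤ (k : ℕ∞)) ∧
       (∀ d d' : V, s d = true → s d' = true → d ≠ d' →
          (k : ℕ∞) + 1 ≤ G.edist d d')) := by
  simp only [forall_utilSGG_update_le_iff G k b p s _ hp hb]
  exact (G.isKIndepDominating_iff k (D := {i | s i = true})).symm

/-- In the SGG, a profile is a Nash equilibrium iff the set of buyers is a
`k`-independent dominating set. -/
theorem sgg_NE_iff_kIndepDomSet {V : Type} [Fintype V] [DecidableEq V]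
    (G : SimpleGraph V) (k : ℕ) (hk : 1 ≤ k) (b p : ℚ) (hp : 0 < p) (hb : p < b)
    (s : V → Bool) :
    (∀ i : V, ∀ c : Bool,
        utilSGG G k b p (Function.update s i c) i ≤ utilSGG G k b p s i) ↔
      ((∀ v : V, ∃ d, s d = true ∧ G.edist v d ≤ (k : ℕ∞)) ∧
       (∀ d d' : V, s d = true → s d' = true → d ≠ d' →
          (k : ℕ∞) + 1 ≤ G.edist d d')) :=
  sgg_NE_iff_kIndepDomSet_general G k b p hp hb s
end

section
/- Every shareable goods game (SGG) on a finite graph admits a Nash equilibrium. -/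
/-!
Fix a maximal independent set `S` (Zorn) of the `k`-th power of `G` (two distinct vertices adjacent when
at distance at most `k`) and let exactly the members of `S` buy. A buyer has no other buyer within
distance `k`, so dropping out would leave it with `0 ≤ b - p`. A non-buyer has a buyer within
distance `k` by maximality, so it already gets `b`, the largest utility there is.
-/

namespace SimpleGraph

variable {V : Type*} (G : SimpleGraph V)

theorem exists_maximal_isIndepSet : ∃ s, Maximal G.IsIndepSet s :=
  zorn_subset _ fun c hcS hc =>
    ⟨⋃₀ c, hc.pairwise_sUnion.mpr hcS, fun _ => Set.subset_sUnion_of_mem⟩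

theorem exists_adj_of_maximal_isIndepSet {s : Set V} (hs : Maximal G.IsIndepSet s) {v : V}
    (hv : v ∉ s) : ∃ w ∈ s, G.Adj v w := by
  by_contra! h
  have hins : G.IsIndepSet (insert v s) :=
    hs.prop.insert fun w hw _ => ⟨h w hw, fun hwv => h w hw hwv.symm⟩
  exact hv (hs.mem_of_prop_insert hins)

def power (k : ℕ) : SimpleGraph V :=
  fromRel fun u v => G.edist u v ≤ k

theorem power_adj {k : ℕ} {u v : V} : (G.power k).Adj u v ↔ u ≠ v ∧ G.edist u v ≤ k := by
  simp [power, G.edist_comm (u := v)]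

end SimpleGraph

section SGG

variable {V : Type} (G : SimpleGraph V) (k : ℕ) (b p : ℚ) (s : V → Bool) (i : V)

theorem utilSGG_of_buy (hi : s i = true) : utilSGG G k b p s i = b - p := by
  simp [utilSGG, hi]

theorem utilSGG_of_free_ride (hi : s i = false) (h : ∃ j, s j ∧ G.edist i j ≤ k) :
    utilSGG G k b p s i = b := by
  simp [utilSGG, hi, h]

theorem utilSGG_le (hp : 0 ≤ p) (hb : 0 ≤ b) : utilSGG G k b p s i ≤ b := by
  unfold utilSGG
  split_ifs <;> linarith

theorem utilSGG_update_false_eq_zero [DecidableEq V] (h : ∀ j ≠ i, s j → ¬ G.edist i j ≤ k) :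
    utilSGG G k b p (Function.update s i false) i = 0 := by
  have hno : ¬ ∃ j, Function.update s i false j ∧ G.edist i j ≤ k := by
    rintro ⟨j, hj, hij⟩
    obtain rfl | hji := eq_or_ne j i
    · simp at hj
    · exact h j hji (by simpa [hji] using hj) hij
  simp [utilSGG, hno]

end SGG

theorem sgg_NE_exists_general {V : Type} [DecidableEq V]
    (G : SimpleGraph V) (k : ℕ) (b p : ℚ) (hp : 0 < p) (hb : p < b) :
    ∃ s : V → Bool, ∀ i : V, ∀ c : Bool,
      utilSGG G k b p (Function.update s i c) i ≤ utilSGG G k b p s i := by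
  classical
  obtain ⟨S, hS⟩ := (G.power k).exists_maximal_isIndepSet
  set s : V → Bool := fun v => decide (v ∈ S)
  refine ⟨s, fun i c => ?_⟩
  by_cases hi : i ∈ S
  · rw [utilSGG_of_buy G k b p s i (by simpa [s] using hi)]
    cases c with
    | true => exact (utilSGG_of_buy G k b p _ i (Function.update_self i true s)).le
    | false =>
      have hlonely : ∀ j ≠ i, s j → ¬ G.edist i j ≤ k := fun j hji hj hij =>
        hS.prop (by simpa [s] using hj) hi hji (G.power_adj.mpr ⟨hji, by rwa [G.edist_comm]⟩)
      rw [utilSGG_update_false_eq_zero G k b p s i hlonely]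
      linarith
  · obtain ⟨j, hjS, hij⟩ := (G.power k).exists_adj_of_maximal_isIndepSet hS hi
    rw [utilSGG_of_free_ride G k b p s i (by simpa [s] using hi)
      ⟨j, by simpa [s] using hjS, (G.power_adj.mp hij).2⟩]
    exact utilSGG_le G k b p _ i hp.le (by linarith)

/-- Every SGG on a finite graph admits a Nash equilibrium. -/
theorem sgg_NE_exists {V : Type} [Fintype V] [DecidableEq V]
    (G : SimpleGraph V) (k : ℕ) (hk : 1 ≤ k) (b p : ℚ) (hp : 0 < p) (hb : p < b) :
    ∃ s : V → Bool, ∀ i : V, ∀ c : Bool,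
      utilSGG G k b p (Function.update s i c) i ≤ utilSGG G k b p s i :=
  sgg_NE_exists_general G k b p hp hb
end

section
/- Let G be a finite simple graph with n vertices and c connected components, and let k ≥ 1 with k' = ⌊k/2⌋ ≥ 1. If D is a k-independent dominating set of G, then |D| ≤ n/k' + c. -/
/-!
Balls of radius `r` around points at pairwise distance `> 2r` are disjoint, so at most `n / r`
of them have `r` or more vertices. A ball with fewer than `r` vertices contains every vertex
reachable from its centre (a geodesic leaving it would put `r + 1` vertices into it), so two
such centres lie in different components: there are at most `c` of them.
-/

open Finset

namespace SimpleGraph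

variable {V : Type*} {G : SimpleGraph V}

lemma Walk.edist_getVert_of_length_eq_edist {u v : V} (p : G.Walk u v)
    (hp : (p.length : ℕ∞) = G.edist u v) {i : ℕ} (hi : i ≤ p.length) :
    G.edist u (p.getVert i) = i := by
  have hle : G.edist u (p.getVert i) ≤ i := by
    simpa [hi] using (p.take i).edist_le
  have hrest : G.edist (p.getVert i) v ≤ (p.length - i : ℕ) := by
    simpa using (p.drop i).edist_le
  obtain ⟨m, hm⟩ := ENat.ne_top_iff_exists.mp (hle.trans_lt (ENat.natCast_lt_top i)).ne
  have htri := G.edist_triangle (u := u) (v := p.getVert i) (w := v)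
  rw [← hp, ← hm] at htri
  rw [← hm] at hle ⊢
  have hlen : (p.length : ℕ∞) ≤ ((m + (p.length - i) : ℕ) : ℕ∞) := by
    push_cast; exact htri.trans (add_le_add le_rfl hrest)
  norm_cast at hle hlen ⊢
  omega

variable [Fintype V]

noncomputable def closedBall (G : SimpleGraph V) (u : V) (r : ℕ) : Finset V :=
  Finset.univ.filter fun v => G.edist u v ≤ r

@[simp]
lemma mem_closedBall {u v : V} {r : ℕ} : v ∈ G.closedBall u r ↔ G.edist u v ≤ r := by
  simp [closedBall]

lemma disjoint_closedBall_of_lt_edist {u v : V} {r : ℕ} (h : 2 * (r : ℕ∞) < G.edist u v) :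
    Disjoint (G.closedBall u r) (G.closedBall v r) := by
  refine Finset.disjoint_left.mpr fun w hu hv => h.not_ge ?_
  rw [mem_closedBall] at hu hv
  rw [edist_comm] at hv
  calc G.edist u v ≤ G.edist u w + G.edist w v := G.edist_triangle
    _ ≤ r + r := add_le_add hu hv
    _ = 2 * r := (two_mul _).symm

lemma lt_card_closedBall_of_lt_edist {u v : V} {r : ℕ} (huv : G.Reachable u v)
    (h : (r : ℕ∞) < G.edist u v) : r < #(G.closedBall u r) := by
  obtain ⟨p, hp⟩ := huv.exists_walk_length_eq_edist
  have hr : r < p.length := by rw [← hp] at h; exact_mod_cast h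
  have hdist : ∀ i ≤ r, G.edist u (p.getVert i) = i := fun i hi =>
    p.edist_getVert_of_length_eq_edist hp (by omega)
  calc r < #(Finset.range (r + 1)) := by simp
    _ ≤ #(G.closedBall u r) := by
      refine Finset.card_le_card_of_injOn p.getVert (fun i hi => ?_) fun i hi j hj hij => ?_
      · simp only [Finset.coe_range, Set.mem_Iio] at hi
        simp [hdist i (by omega)]; omega
      · simp only [Finset.coe_range, Set.mem_Iio] at hi hj
        have := hdist i (by omega) ▸ hdist j (by omega) ▸ congrArg (G.edist u) hij
        exact_mod_cast this

lemma card_mul_le_card_of_le_card_closedBall {s : Finset V} {r : ℕ}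
    (hs : ∀ d ∈ s, ∀ d' ∈ s, d ≠ d' → 2 * (r : ℕ∞) < G.edist d d')
    (hball : ∀ d ∈ s, r ≤ #(G.closedBall d r)) : #s * r ≤ Fintype.card V := by
  classical
  have hdisj : (s : Set V).PairwiseDisjoint (G.closedBall · r) := fun d hd d' hd' hne =>
    disjoint_closedBall_of_lt_edist (hs d hd d' hd' hne)
  calc #s * r = ∑ _d ∈ s, r := by simp
    _ ≤ ∑ d ∈ s, #(G.closedBall d r) := sum_le_sum hball
    _ = #(s.biUnion (G.closedBall · r)) := (card_biUnion hdisj).symm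
    _ ≤ Fintype.card V := card_le_univ _

lemma card_le_card_connectedComponent_of_card_closedBall_le {s : Finset V} {r : ℕ}
    (hs : ∀ d ∈ s, ∀ d' ∈ s, d ≠ d' → (r : ℕ∞) < G.edist d d')
    (hball : ∀ d ∈ s, #(G.closedBall d r) ≤ r) : #s ≤ Nat.card G.ConnectedComponent := by
  classical
  rw [Nat.card_eq_fintype_card, ← card_univ]
  refine card_le_card_of_injOn G.connectedComponentMk (fun _ _ => mem_univ _) ?_
  intro d hd d' hd' hdd'
  by_contra hne
  exact (hball d hd).not_gt <|
    lt_card_closedBall_of_lt_edist (ConnectedComponent.exact hdd') (hs d hd d' hd' hne)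

theorem card_le_card_div_add_card_connectedComponent {D : Finset V} {r : ℕ} (hr : 0 < r)
    (hD : ∀ d ∈ D, ∀ d' ∈ D, d ≠ d' → 2 * (r : ℕ∞) < G.edist d d') :
    (#D : ℚ) ≤ Fintype.card V / r + Nat.card G.ConnectedComponent := by
  classical
  set s := D.filter fun d => r ≤ #(G.closedBall d r)
  set t := D.filter fun d => ¬ r ≤ #(G.closedBall d r)
  have hs : #s * r ≤ Fintype.card V :=
    card_mul_le_card_of_le_card_closedBall (fun d hd d' hd' => hD d (mem_filter.mp hd).1 d'
      (mem_filter.mp hd').1) fun d hd => (mem_filter.mp hd).2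
  have ht : #t ≤ Nat.card G.ConnectedComponent := by
    refine card_le_card_connectedComponent_of_card_closedBall_le (fun d hd d' hd' hne => ?_)
      fun d hd => (not_le.mp (mem_filter.mp hd).2).le
    refine lt_of_le_of_lt ?_ (hD d (mem_filter.mp hd).1 d' (mem_filter.mp hd').1 hne)
    exact le_mul_of_one_le_left' (by norm_num)
  have hst : #s + #t = #D := card_filter_add_card_filter_not _
  calc (#D : ℚ) = #s + #t := by exact_mod_cast hst.symm
    _ ≤ Fintype.card V / r + Nat.card G.ConnectedComponent :=
      add_le_add ((le_div_iff₀ (by exact_mod_cast hr)).mpr (by exact_mod_cast hs))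
        (by exact_mod_cast ht)

end SimpleGraph

theorem kIndepDomSet_card_le_general {V : Type} [Fintype V] (G : SimpleGraph V)
    (k : ℕ) (hk : 2 ≤ k) (D : Finset V)
    (hind : ∀ d ∈ D, ∀ d' ∈ D, d ≠ d' → (k : ℕ∞) + 1 ≤ G.edist d d') :
    (D.card : ℚ) ≤ (Fintype.card V : ℚ) / ((k / 2 : ℕ) : ℚ)
      + (Nat.card G.ConnectedComponent : ℚ) := by
  refine G.card_le_card_div_add_card_connectedComponent (by omega) fun d hd d' hd' hne => ?_
  have h : ((2 * (k / 2) : ℕ) : ℕ∞) < k + 1 := by exact_mod_cast Nat.lt_succ_of_le (Nat.mul_div_le k 2)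
  push_cast at h
  exact h.trans_le (hind d hd d' hd' hne)

/-- If `D` is a `k`-independent dominating set of a finite graph `G` with `n`
vertices and `c` connected components, and `k' = ⌊k/2⌋ ≥ 1`, then `|D| ≤ n/k' + c`. -/
theorem kIndepDomSet_card_le {V : Type} [Fintype V] (G : SimpleGraph V)
    (k : ℕ) (hk : 2 ≤ k) (D : Finset V)
    (hdom : ∀ v : V, ∃ d ∈ D, G.edist v d ≤ (k : ℕ∞))
    (hind : ∀ d ∈ D, ∀ d' ∈ D, d ≠ d' → (k : ℕ∞) + 1 ≤ G.edist d d') :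
    (D.card : ℚ) ≤ (Fintype.card V : ℚ) / ((k / 2 : ℕ) : ℚ)
      + (Nat.card G.ConnectedComponent : ℚ) :=
  kIndepDomSet_card_le_general G k hk D hind
end

section
/- The price of anarchy of the SGG is at most n/⌊k/2⌋ + 1: for any k-independent dominating set D and any k-dominating set D* of a finite graph G with n vertices and c components, |D| ≤ (n/⌊k/2⌋ + 1)·|D*|, assuming k ≥ 2. -/
/-!
The balls of radius `⌊k/2⌋` around the points of a `k`-independent set `D` are pairwise disjoint
(Mathlib's balls are open, so this ball is `G.ball d (⌊k/2⌋ + 1)`). A centre whose ball contains a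
point of `D*` is charged to that point, injectively by disjointness. A centre whose ball misses `D*`
still reaches a point of `D*`, which lies beyond distance `⌊k/2⌋`; a shortest path to it puts more
than `⌊k/2⌋` vertices in the ball, so there are at most `n / (⌊k/2⌋ + 1)` such centres.
-/

open Finset

namespace SimpleGraph

variable {V : Type} {G : SimpleGraph V}

lemma edist_getVert_le {u v : V} (p : G.Walk u v) (i : ℕ) : G.edist u (p.getVert i) ≤ i :=
  (edist_le (p.take i)).trans (by simp [Walk.take_length])

lemma disjoint_ball_of_add_lt_edist {u w : V} {r s : ℕ} (h : (r + s : ℕ∞) < G.edist u w) :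
    Disjoint (G.ball u (r + 1)) (G.ball w (s + 1)) := by
  refine Set.disjoint_left.2 fun x hxu hxw => ?_
  rw [mem_ball, ENat.lt_add_one_iff (ENat.natCast_ne_top r), edist_comm] at hxu
  rw [mem_ball, ENat.lt_add_one_iff (ENat.natCast_ne_top s)] at hxw
  exact (G.edist_triangle.trans (add_le_add hxu hxw)).not_gt h

lemma add_one_le_ncard_ball [Finite V] {c v : V} {m : ℕ} (hv : G.Reachable c v)
    (hm : (m : ℕ∞) < G.edist c v) : m + 1 ≤ (G.ball c (m + 1)).ncard := by
  obtain ⟨p, hp, hlen⟩ := hv.exists_path_of_dist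
  have hmp : m < p.length := by
    rw [← hv.coe_dist_eq_edist, ← hlen] at hm
    exact_mod_cast hm
  have hmaps : ∀ i ∈ (range (m + 1) : Set ℕ), p.getVert i ∈ G.ball c (m + 1) := fun i hi => by
    rw [mem_ball, edist_comm]
    refine (edist_getVert_le p i).trans_lt ?_
    exact_mod_cast mem_range.1 hi
  have hinj : Set.InjOn p.getVert (range (m + 1) : Set ℕ) :=
    hp.getVert_injOn.mono fun i hi => (Nat.lt_succ_iff.1 (mem_range.1 hi)).trans hmp.le
  simpa using Set.ncard_le_ncard_of_injOn _ hmaps hinj (Set.toFinite _)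

lemma card_mul_le_of_pairwiseDisjoint_ball [Fintype V] {m : ℕ} {D T : Finset V}
    (hD : (D : Set V).PairwiseDisjoint (G.ball · (m + 1)))
    (hT : ∀ v, ∃ t ∈ T, G.Reachable v t) :
    (m + 1) * #D ≤ Fintype.card V + (m + 1) * #T := by
  classical
  set B : V → Finset V := fun d => (G.ball d (m + 1)).toFinset
  have hB : (D : Set V).PairwiseDisjoint B := fun d hd d' hd' hne =>
    Set.disjoint_toFinset.2 (hD hd hd' hne)
  have hmeet : #{d ∈ D | (T ∩ B d).Nonempty} ≤ #T := by
    refine (card_le_card_biUnion (f := (T ∩ B ·)) ?_ fun d hd => (mem_filter.1 hd).2).trans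
      (card_le_card (biUnion_subset.2 fun _ _ => inter_subset_left))
    exact (hB.subset (coe_subset.2 (filter_subset _ _))).mono fun _ => inter_subset_right
  have hmiss : (m + 1) * #{d ∈ D | ¬(T ∩ B d).Nonempty} ≤ Fintype.card V := by
    set D' := {d ∈ D | ¬(T ∩ B d).Nonempty}
    have hbig : ∀ d ∈ D', m + 1 ≤ #(B d) := fun d hd => by
      obtain ⟨t, htT, hdt⟩ := hT d
      have ht : t ∉ G.ball d (m + 1) := fun ht =>
        (mem_filter.1 hd).2 ⟨t, mem_inter.2 ⟨htT, Set.mem_toFinset.2 ht⟩⟩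
      rw [mem_ball, not_lt, edist_comm, ENat.add_one_le_iff (ENat.natCast_ne_top m)] at ht
      simpa [B, Set.ncard_eq_toFinset_card'] using add_one_le_ncard_ball hdt ht
    calc (m + 1) * #D' = ∑ _d ∈ D', (m + 1) := by rw [sum_const, smul_eq_mul, mul_comm]
      _ ≤ ∑ d ∈ D', #(B d) := sum_le_sum hbig
      _ = #(D'.biUnion B) := (card_biUnion (hB.subset (coe_subset.2 (filter_subset _ _)))).symm
      _ ≤ Fintype.card V := card_le_univ _
  calc (m + 1) * #D
      = (m + 1) * #{d ∈ D | ¬(T ∩ B d).Nonempty} + (m + 1) * #{d ∈ D | (T ∩ B d).Nonempty} := by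
        rw [← mul_add, add_comm (#_), card_filter_add_card_filter_not]
    _ ≤ Fintype.card V + (m + 1) * #T := add_le_add hmiss (Nat.mul_le_mul_left _ hmeet)

end SimpleGraph

open SimpleGraph

lemma cast_le_div_add_one_mul {a b n m : ℕ} (hm : 0 < m) (h : (m + 1) * a ≤ n + (m + 1) * b)
    (hb : b = 0 → n = 0) : (a : ℚ) ≤ (n / m + 1) * b := by
  rcases Nat.eq_zero_or_pos b with rfl | hb1
  · have : a = 0 := by nlinarith [hb rfl]
    simp [this]
  have hmq : (0 : ℚ) < m := by exact_mod_cast hm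
  have hq : ((m : ℚ) + 1) * a ≤ n + (m + 1) * b := by exact_mod_cast h
  have hnb : (n : ℚ) ≤ n * b := le_mul_of_one_le_right (by positivity) (by exact_mod_cast hb1)
  rw [add_one_mul, div_mul_eq_mul_div, ← sub_le_iff_le_add, le_div_iff₀ hmq]
  nlinarith

theorem sgg_poa_upper_general {V : Type} [Fintype V] (G : SimpleGraph V)
    (k : ℕ) (hk : 2 ≤ k) (D Dstar : Finset V)
    (hind : ∀ d ∈ D, ∀ d' ∈ D, d ≠ d' → (k : ℕ∞) + 1 ≤ G.edist d d')
    (hdomstar : ∀ v : V, ∃ d ∈ Dstar, G.edist v d ≤ (k : ℕ∞)) :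
    (D.card : ℚ) ≤ ((Fintype.card V : ℚ) / ((k / 2 : ℕ) : ℚ) + 1) * Dstar.card := by
  have hradius : (↑(k / 2) + ↑(k / 2) : ℕ∞) < k + 1 := by
    have : k / 2 + k / 2 < k + 1 := by omega
    exact_mod_cast this
  have hballs : (D : Set V).PairwiseDisjoint (G.ball · (↑(k / 2) + 1)) :=
    fun d hd d' hd' hne => disjoint_ball_of_add_lt_edist (hradius.trans_le (hind d hd d' hd' hne))
  have hreach : ∀ v, ∃ t ∈ Dstar, G.Reachable v t := fun v => by
    obtain ⟨t, ht, hvt⟩ := hdomstar v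
    exact ⟨t, ht, reachable_of_edist_ne_top (ne_top_of_le_ne_top (ENat.natCast_ne_top k) hvt)⟩
  refine cast_le_div_add_one_mul (by omega)
    (card_mul_le_of_pairwiseDisjoint_ball hballs hreach) fun hDstar => ?_
  rw [card_eq_zero] at hDstar
  subst hDstar
  exact Fintype.card_eq_zero_iff.2 ⟨fun v => by simpa using hdomstar v⟩

/-- PoA upper bound for the SGG: for any `k`-independent dominating set `D`
(a Nash equilibrium) and any `k`-dominating set `D*` (an arbitrary feasible
configuration, in particular the optimum), `|D| ≤ (n/⌊k/2⌋ + 1)·|D*|`. -/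
theorem sgg_poa_upper {V : Type} [Fintype V] (G : SimpleGraph V)
    (k : ℕ) (hk : 2 ≤ k) (D Dstar : Finset V)
    (hdom : ∀ v : V, ∃ d ∈ D, G.edist v d ≤ (k : ℕ∞))
    (hind : ∀ d ∈ D, ∀ d' ∈ D, d ≠ d' → (k : ℕ∞) + 1 ≤ G.edist d d')
    (hdomstar : ∀ v : V, ∃ d ∈ Dstar, G.edist v d ≤ (k : ℕ∞)) :
    (D.card : ℚ) ≤ ((Fintype.card V : ℚ) / ((k / 2 : ℕ) : ℚ) + 1) * Dstar.card :=
  sgg_poa_upper_general G k hk D Dstar hind hdomstar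
end

section
/- In the graph G_{k,m} (two adjacent centers each with m attached arms that are paths on k vertices), every k-independent dominating set has size at least m. -/
/-!
At most one of the two adjacent centers lies in `D`, say center `c` does not. Each vertex of `D`
within distance `k` of the far endpoint of an arm at `c` must lie on that arm: the potential that
counts the position along this arm (and is `0` at `c`, `-1` elsewhere) changes by at most one
along an edge and equals `k` at the endpoint, so it is positive wherever the endpoint's `k`-ball
reaches. Hence the `m` arms at `c` meet `D` in pairwise distinct vertices.
-/

/-- The graph `G_{k,m}`: two adjacent centers (`Sum.inl 0` and `Sum.inl 1`);
for each `c : Fin 2`, `m` arms, each a path on `k` vertices, with the `0`-th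
vertex of each arm adjacent to center `c`. -/
def armGraph (k m : ℕ) : SimpleGraph (Fin 2 ⊕ Fin 2 × Fin m × Fin k) :=
  SimpleGraph.fromRel (fun x y =>
    (x = Sum.inl 0 ∧ y = Sum.inl 1) ∨
    (∃ c j i, x = Sum.inl c ∧ y = Sum.inr (c, j, i) ∧ (i : ℕ) = 0) ∨
    (∃ c j i i', x = Sum.inr (c, j, i) ∧ y = Sum.inr (c, j, i') ∧
      (i' : ℕ) = (i : ℕ) + 1))

namespace SimpleGraph

variable {V : Type*} {G : SimpleGraph V}

theorem Walk.sub_le_length {f : V → ℤ} (hf : ∀ ⦃x y⦄, G.Adj x y → |f x - f y| ≤ 1)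
    {u v : V} (p : G.Walk u v) : f u - f v ≤ p.length := by
  induction p with
  | nil => simp
  | cons h p ih =>
    have := abs_le.mp (hf h)
    push_cast [Walk.length_cons]
    omega

theorem sub_le_of_edist_le {f : V → ℤ} (hf : ∀ ⦃x y⦄, G.Adj x y → |f x - f y| ≤ 1)
    {u v : V} {n : ℕ} (h : G.edist u v ≤ n) : f u - f v ≤ n := by
  obtain ⟨p, hp⟩ := exists_walk_of_edist_ne_top (ne_top_of_le_ne_top (ENat.natCast_ne_top n) h)
  have : p.length ≤ n := by exact_mod_cast hp ▸ h
  exact (p.sub_le_length hf).trans (by exact_mod_cast this)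

theorem notMem_of_adj_of_le_edist {n : ℕ} (hn : 1 ≤ n) {D : Set V}
    (hind : ∀ d ∈ D, ∀ d' ∈ D, d ≠ d' → (n : ℕ∞) + 1 ≤ G.edist d d') {u v : V}
    (huv : G.Adj u v) (hu : u ∈ D) : v ∉ D := by
  intro hv
  have := (hind u hu v hv huv.ne).trans_eq (edist_eq_one_iff_adj.mpr huv)
  have : n + 1 ≤ 1 := by exact_mod_cast this
  omega

end SimpleGraph

namespace armGraph

variable {k m : ℕ}

theorem adj_inl_zero_inl_one : (armGraph k m).Adj (.inl 0) (.inl 1) := by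
  rw [armGraph, SimpleGraph.fromRel_adj]
  exact ⟨by simp, .inl (.inl ⟨rfl, rfl⟩)⟩

def potential (c : Fin 2) (j : Fin m) : Fin 2 ⊕ Fin 2 × Fin m × Fin k → ℤ
  | .inl c' => if c' = c then 0 else -1
  | .inr (c', j', i) => if c' = c ∧ j' = j then i + 1 else -1

theorem potential_inr_self (c : Fin 2) (j : Fin m) (i : Fin k) :
    potential c j (.inr (c, j, i)) = i + 1 := by
  simp [potential]

theorem abs_potential_sub_le_one (c : Fin 2) (j : Fin m)
    ⦃x y : Fin 2 ⊕ Fin 2 × Fin m × Fin k⦄ (hxy : (armGraph k m).Adj x y) :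
    |potential c j x - potential c j y| ≤ 1 := by
  obtain ⟨-, h | h⟩ := hxy
  on_goal 2 => rw [abs_sub_comm]
  all_goals
    rw [abs_le]
    rcases h with ⟨rfl, rfl⟩ | ⟨c', j', i, rfl, rfl, hi⟩ | ⟨c', j', i, i', rfl, rfl, hi⟩
      <;> simp only [potential] <;> split_ifs <;> omega

theorem eq_inl_or_exists_eq_inr_of_potential_nonneg {c : Fin 2} {j : Fin m}
    {x : Fin 2 ⊕ Fin 2 × Fin m × Fin k} (hx : 0 ≤ potential c j x) :
    x = .inl c ∨ ∃ i, x = .inr (c, j, i) := by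
  rcases x with c' | ⟨c', j', i⟩ <;> simp only [potential] at hx <;> split_ifs at hx with h
  · exact .inl (congrArg _ h)
  · omega
  · exact .inr ⟨i, by rw [h.1, h.2]⟩
  · omega

theorem exists_inr_mem_of_inl_notMem (hk : 1 ≤ k) {D : Set (Fin 2 ⊕ Fin 2 × Fin m × Fin k)}
    (hdom : ∀ v, ∃ d ∈ D, (armGraph k m).edist v d ≤ k) {c : Fin 2} (hc : .inl c ∉ D)
    (j : Fin m) : ∃ i, .inr (c, j, i) ∈ D := by
  obtain ⟨d, hd, hdist⟩ := hdom (.inr (c, j, ⟨k - 1, by omega⟩))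
  have := SimpleGraph.sub_le_of_edist_le (abs_potential_sub_le_one c j) hdist
  rw [potential_inr_self] at this
  have hd_nonneg : 0 ≤ potential c j d := by push_cast at this; omega
  rcases eq_inl_or_exists_eq_inr_of_potential_nonneg hd_nonneg with rfl | ⟨i, rfl⟩
  · exact absurd hd hc
  · exact ⟨i, hd⟩

end armGraph

theorem armGraph_kIndepDomSet_ge_general (k m : ℕ) (hk : 1 ≤ k)
    (D : Finset (Fin 2 ⊕ Fin 2 × Fin m × Fin k))
    (hdom : ∀ v, ∃ d ∈ D, (armGraph k m).edist v d ≤ (k : ℕ∞))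
    (hind : ∀ d ∈ D, ∀ d' ∈ D, d ≠ d' → (k : ℕ∞) + 1 ≤ (armGraph k m).edist d d') :
    m ≤ D.card := by
  obtain ⟨c, hc⟩ : ∃ c : Fin 2, Sum.inl c ∉ D := by
    by_cases h0 : Sum.inl 0 ∈ D
    · exact ⟨1, SimpleGraph.notMem_of_adj_of_le_edist hk hind
        armGraph.adj_inl_zero_inl_one h0⟩
    · exact ⟨0, h0⟩
  choose i hi using armGraph.exists_inr_mem_of_inl_notMem hk
    (D := (D : Set (Fin 2 ⊕ Fin 2 × Fin m × Fin k))) hdom hc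
  calc m = (Finset.univ : Finset (Fin m)).card := (Finset.card_fin m).symm
    _ ≤ D.card := Finset.card_le_card_of_injOn (fun j => .inr (c, j, i j)) (fun j _ => hi j)
        fun j _ j' _ h => (by simpa using h : j = j' ∧ _).1

/-- Every `k`-independent dominating set of `G_{k,m}` has size at least `m`. -/
theorem armGraph_kIndepDomSet_ge (k m : ℕ) (hk : 1 ≤ k) (hm : 1 ≤ m)
    (D : Finset (Fin 2 ⊕ Fin 2 × Fin m × Fin k))
    (hdom : ∀ v, ∃ d ∈ D, (armGraph k m).edist v d ≤ (k : ℕ∞))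
    (hind : ∀ d ∈ D, ∀ d' ∈ D, d ≠ d' → (k : ℕ∞) + 1 ≤ (armGraph k m).edist d d') :
    m ≤ D.card :=
  armGraph_kIndepDomSet_ge_general k m hk D hdom hind
end

section
/- The price of stability of the SGG is Ω(n/k): for all k, m ≥ 1 there is a graph with n = 2mk + 2 vertices on which the minimum size of a k-dominating set is at most 2 while the minimum size of a k-independent dominating set is at least m. -/
/-!
Two adjacent centers, each carrying `m` pendant paths of `k` vertices. Every vertex lies within
distance `k` of its own center, so the two centers form a `k`-dominating set. In a
`k`-independent set at most one center occurs, since the centers are adjacent. The tip of an arm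
is at distance exactly `k` from its center and farther from everything off that arm, so each of
the `m` tips on the side of the missing center needs its own dominator on its own arm.
-/

open SimpleGraph

lemma SimpleGraph.Walk.le_add_length_of_forall_adj {V : Type*} {G : SimpleGraph V} (f : V → ℕ)
    (hf : ∀ a b, G.Adj a b → f a ≤ f b + 1) {u v : V} (p : G.Walk u v) :
    f u ≤ f v + p.length := by
  induction p with
  | nil => simp
  | cons h _ ih =>
    have := hf _ _ h
    rw [Walk.length_cons]
    omega

lemma SimpleGraph.le_add_edist_of_forall_adj {V : Type*} {G : SimpleGraph V} (f : V → ℕ)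
    (hf : ∀ a b, G.Adj a b → f a ≤ f b + 1) (u v : V) :
    (f u : ℕ∞) ≤ f v + G.edist u v := by
  rcases eq_or_ne (G.edist u v) ⊤ with h | h
  · simp [h]
  · obtain ⟨p, hp⟩ := exists_walk_of_edist_ne_top h
    rw [← hp]
    exact_mod_cast p.le_add_length_of_forall_adj f hf

def SimpleGraph.IsDistDominating {V : Type*} (G : SimpleGraph V) (k : ℕ) (D : Finset V) : Prop :=
  ∀ v, ∃ d ∈ D, G.edist v d ≤ k

namespace TwoStars

/-- `Sum.inl b` is the center `b`; `Sum.inr (b, i, j)` is the vertex at distance `j + 1` from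
center `b` on its `i`-th arm. -/
abbrev Vertex (m k : ℕ) : Type := Bool ⊕ (Bool × Fin m × Fin k)

def Rel (m k : ℕ) : Vertex m k → Vertex m k → Prop
  | .inl _, .inl _ => True
  | .inr (b, _, j), .inl b' => b = b' ∧ j.val = 0
  | .inr (b, i, j), .inr (b', i', j') => b = b' ∧ i = i' ∧ j.val = j'.val + 1
  | _, _ => False

def graph (m k : ℕ) : SimpleGraph (Vertex m k) := SimpleGraph.fromRel (Rel m k)

variable {m k : ℕ}

lemma card_vertex : Nat.card (Vertex m k) = 2 * m * k + 2 := by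
  simp only [Nat.card_eq_fintype_card, Fintype.card_sum, Fintype.card_prod, Fintype.card_bool,
    Fintype.card_fin]
  ring

lemma adj_centers : (graph m k).Adj (.inl true) (.inl false) := by
  simp [graph, Rel]

lemma edist_arm_center_le (b : Bool) (i : Fin m) (j : Fin k) :
    (graph m k).edist (.inr (b, i, j)) (.inl b) ≤ (j.val + 1 : ℕ) := by
  obtain ⟨j, hj⟩ := j
  induction j with
  | zero =>
    have hadj : (graph m k).Adj (.inr (b, i, ⟨0, hj⟩)) (.inl b) := by simp [graph, Rel]
    simp [edist_eq_one_iff_adj.mpr hadj]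
  | succ j ih =>
    have hadj : (graph m k).Adj (.inr (b, i, ⟨j + 1, hj⟩)) (.inr (b, i, ⟨j, by omega⟩)) := by
      simp [graph, Rel]
    calc (graph m k).edist (.inr (b, i, ⟨j + 1, hj⟩)) (.inl b)
        ≤ 1 + (graph m k).edist (.inr (b, i, ⟨j, by omega⟩)) (.inl b) := by
          rw [← edist_eq_one_iff_adj.mpr hadj]
          exact SimpleGraph.edist_triangle
      _ ≤ 1 + (j + 1 : ℕ) := by gcongr; exact ih (by omega)
      _ = (j + 1 + 1 : ℕ) := by push_cast; ring

lemma isDistDominating_centers :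
    (graph m k).IsDistDominating k {.inl true, .inl false} := by
  rintro (b | ⟨b, i, j⟩)
  · exact ⟨.inl b, by cases b <;> simp, by simp⟩
  · refine ⟨.inl b, by cases b <;> simp, (edist_arm_center_le b i j).trans ?_⟩
    exact_mod_cast j.isLt

/-- A lower bound for the distance to the tip of arm `i` at center `b`: it is `0` at the tip and
exceeds `k` off that arm and its center. -/
def tipPotential (b : Bool) (i : Fin m) : Vertex m k → ℕ
  | .inl b' => if b' = b then k else k + 1
  | .inr (b', i', j) => if b' = b ∧ i' = i then k - 1 - j.val else k + 1

lemma tipPotential_le_succ_of_adj (b : Bool) (i : Fin m) {u v : Vertex m k}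
    (huv : (graph m k).Adj u v) : tipPotential b i u ≤ tipPotential b i v + 1 := by
  rw [graph, fromRel_adj] at huv
  obtain ⟨-, hr | hr⟩ := huv <;>
  rcases u with _ | ⟨_, _, ⟨_, _⟩⟩ <;> rcases v with _ | ⟨_, _, ⟨_, _⟩⟩ <;>
  simp only [Rel] at hr <;> simp only [tipPotential] <;> split_ifs <;> simp_all <;> omega

def tip (hk : 1 ≤ k) (b : Bool) (i : Fin m) : Vertex m k := .inr (b, i, ⟨k - 1, by omega⟩)

lemma eq_center_or_mem_arm_of_edist_tip_le (hk : 1 ≤ k) (b : Bool) (i : Fin m) {d : Vertex m k}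
    (hd : (graph m k).edist (tip hk b i) d ≤ k) :
    d = .inl b ∨ ∃ j, d = .inr (b, i, j) := by
  have hpot : tipPotential b i d ≤ k := by
    have := le_add_edist_of_forall_adj (tipPotential b i)
      (fun _ _ => tipPotential_le_succ_of_adj b i) d (tip hk b i)
    have htip : tipPotential b i (tip hk b i) = 0 := by simp [tip, tipPotential]
    rw [htip, Nat.cast_zero, zero_add, edist_comm] at this
    exact_mod_cast this.trans hd
  rcases d with b' | ⟨b', i', j⟩
  · by_cases hb : b' = b
    · exact .inl (hb ▸ rfl)
    · simp [tipPotential, hb] at hpot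
  · by_cases hbi : b' = b ∧ i' = i
    · obtain ⟨rfl, rfl⟩ := hbi
      exact .inr ⟨j, rfl⟩
    · simp [tipPotential, hbi] at hpot

lemma le_card_of_isDistDominating_of_center_notMem (hk : 1 ≤ k) (b : Bool)
    {D : Finset (Vertex m k)} (hD : (graph m k).IsDistDominating k D) (hb : .inl b ∉ D) :
    m ≤ D.card := by
  have hdom : ∀ i : Fin m, ∃ j, .inr (b, i, j) ∈ D := by
    intro i
    obtain ⟨d, hdD, hd⟩ := hD (tip hk b i)
    rcases eq_center_or_mem_arm_of_edist_tip_le hk b i hd with rfl | ⟨j, rfl⟩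
    · exact absurd hdD hb
    · exact ⟨j, hdD⟩
  choose j hj using hdom
  calc m = (Finset.univ : Finset (Fin m)).card := by simp
    _ ≤ D.card := Finset.card_le_card_of_injOn (fun i => .inr (b, i, j i)) (fun i _ => hj i)
      fun i _ i' _ h => congrArg (·.2.1) (Sum.inr_injective h)

end TwoStars

theorem sgg_pos_lower_general (k m : ℕ) (hk : 1 ≤ k) :
    ∃ (V : Type) (_ : Finite V) (G : SimpleGraph V),
      Nat.card V = 2 * m * k + 2 ∧
      (∃ D : Finset V, D.card ≤ 2 ∧ ∀ v, ∃ d ∈ D, G.edist v d ≤ (k : ℕ∞)) ∧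
      (∀ D : Finset V, (∀ v, ∃ d ∈ D, G.edist v d ≤ (k : ℕ∞)) →
        (∀ d ∈ D, ∀ d' ∈ D, d ≠ d' → (k : ℕ∞) + 1 ≤ G.edist d d') →
        m ≤ D.card) := by
  refine ⟨TwoStars.Vertex m k, inferInstance, TwoStars.graph m k, TwoStars.card_vertex,
    ⟨_, Finset.card_le_two, TwoStars.isDistDominating_centers⟩, fun D hD hindep => ?_⟩
  have hcenter : .inl true ∉ D ∨ .inl false ∉ D := by
    by_contra! ⟨htrue, hfalse⟩
    have := hindep _ htrue _ hfalse (by simp)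
    rw [edist_eq_one_iff_adj.mpr TwoStars.adj_centers] at this
    norm_cast at this
    omega
  rcases hcenter with h | h
  · exact TwoStars.le_card_of_isDistDominating_of_center_notMem hk true hD h
  · exact TwoStars.le_card_of_isDistDominating_of_center_notMem hk false hD h

/-- PoS lower bound `Ω(n/k)` for the SGG: for all `k, m ≥ 1` there is a graph
with `n = 2mk + 2` vertices whose minimum `k`-dominating set has size at most
`2`, while every `k`-independent dominating set (Nash equilibrium) has size at
least `m`. -/
theorem sgg_pos_lower (k m : ℕ) (hk : 1 ≤ k) (hm : 1 ≤ m) :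
    ∃ (V : Type) (_ : Finite V) (G : SimpleGraph V),
      Nat.card V = 2 * m * k + 2 ∧
      (∃ D : Finset V, D.card ≤ 2 ∧ ∀ v, ∃ d ∈ D, G.edist v d ≤ (k : ℕ∞)) ∧
      (∀ D : Finset V, (∀ v, ∃ d ∈ D, G.edist v d ≤ (k : ℕ∞)) →
        (∀ d ∈ D, ∀ d' ∈ D, d ≠ d' → (k : ℕ∞) + 1 ≤ G.edist d d') →
        m ≤ D.card) :=
  sgg_pos_lower_general k m hk
end

section
/- In the complete graph K_n with n = m(ξ+1) for integers m ≥ 1, ξ ≥ 1, there exists a Nash equilibrium of the SGG-AC in which exactly m vertices buy a good, each buyer having exactly ξ followers; meanwhile the minimum social cost is p (a single buyer suffices). Hence the price of anarchy of the SGG-AC is at least m = n/(ξ+1). -/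
open Classical in
/-- Utility of player `i` in the SGG with access costs (SGG-AC): `s i = i`
means `i` buys a good (getting `b - p` plus `a` per follower), `s i = j ≠ i`
means `i` wants to rent from `j` (getting `b - a` if `j` indeed buys,
`0` otherwise). -/
noncomputable def utilAC {V : Type} [Fintype V] (G : SimpleGraph V) (k : ℕ)
    (b p a : ℚ) (s : V → V) (i : V) : ℚ :=
  if s i = i then
    b - p + a * (Finset.univ.filter (fun j => j ≠ i ∧ s j = i)).card
  else if s (s i) = s i then b - a
  else 0

/-!
Partition the vertices into `m` groups of `ξ + 1`; in each group one vertex buys and the others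
rent from it. Since every renter rents from a buyer, a renter can only switch to renting
elsewhere (gaining at most `b - a` again) or to buying alone (getting `b - p ≤ b - a`), while a
buyer who switches to renting trades `b - p + aξ` for at most `b - a`, which is no gain as
`p ≤ a(ξ + 1)`. A single buyer rented from by everybody is also a feasible profile.
-/

open Finset

lemma SimpleGraph.edist_top_le_one {V : Type} (u v : V) :
    (⊤ : SimpleGraph V).edist u v ≤ 1 := by
  classical
  rw [SimpleGraph.edist_top]
  split_ifs <;> simp

section Utility

variable {V : Type} [Fintype V] (G : SimpleGraph V) (k : ℕ) (b p a : ℚ) {s : V → V} {i : V}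

lemma utilAC_of_rent_of_idem (hs : ∀ j, s (s j) = s j) (hi : s i ≠ i) :
    utilAC G k b p a s i = b - a := by
  simp [utilAC, hi, hs]

variable [DecidableEq V]

lemma utilAC_of_buy (hi : s i = i) :
    utilAC G k b p a s i = b - p + a * #{j | j ≠ i ∧ s j = i} := by
  simp [utilAC, hi]

lemma utilAC_update_of_ne {t : V} (ht : t ≠ i) :
    utilAC G k b p a (Function.update s i t) i = if s t = t then b - a else 0 := by
  simp [utilAC, ht]

/-- Nobody rents from a vertex that rents, so buying alone brings no followers. -/
lemma utilAC_update_self_of_idem (hs : ∀ j, s (s j) = s j) (hi : s i ≠ i) :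
    utilAC G k b p a (Function.update s i i) i = b - p := by
  have hno_followers : ∀ j, j ≠ i → s j ≠ i := fun j _ hj => hi (hj ▸ hs j)
  rw [utilAC_of_buy G k b p a (Function.update_self i i s)]
  suffices #{j | j ≠ i ∧ Function.update s i i j = i} = 0 by simp [this]
  rw [card_eq_zero, filter_eq_empty_iff]
  rintro j - ⟨hji, hj⟩
  exact hno_followers j hji (by rwa [Function.update_of_ne hji] at hj)

theorem utilAC_update_le_of_idem {ξ : ℕ} (hs : ∀ j, s (s j) = s j)
    (hfollowers : ∀ j, s j = j → #{l | l ≠ j ∧ s l = j} = ξ)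
    (hap : a ≤ p) (hab : a ≤ b) (hpξ : p ≤ a * (ξ + 1)) (i t : V) :
    utilAC G k b p a (Function.update s i t) i ≤ utilAC G k b p a s i := by
  by_cases ht : t = i
  · subst ht
    by_cases hi : s t = t
    · rw [Function.update_eq_self_iff.mpr hi.symm]
    · rw [utilAC_update_self_of_idem G k b p a hs hi, utilAC_of_rent_of_idem G k b p a hs hi]
      linarith
  rw [utilAC_update_of_ne G k b p a ht]
  by_cases hi : s i = i
  · rw [utilAC_of_buy G k b p a hi, hfollowers i hi]
    split_ifs <;> linarith
  · rw [utilAC_of_rent_of_idem G k b p a hs hi]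
    split_ifs <;> linarith

end Utility

section GroupProfile

variable {V ι κ : Type}

/-- Every vertex rents from the vertex labelled `c` in its group, where `e` labels a vertex by
its group in `ι` and its position in `κ`. -/
def groupProfile (e : V ≃ ι × κ) (c : κ) (v : V) : V :=
  e.symm ((e v).1, c)

variable (e : V ≃ ι × κ) (c : κ)

lemma groupProfile_idem (v : V) : groupProfile e c (groupProfile e c v) = groupProfile e c v := by
  simp [groupProfile]

lemma groupProfile_eq_iff (v w : V) :
    groupProfile e c w = v ↔ (e w).1 = (e v).1 ∧ (e v).2 = c := by
  rw [groupProfile, Equiv.symm_apply_eq, Prod.ext_iff]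
  exact and_congr Iff.rfl eq_comm

variable [Fintype V] [DecidableEq V]

lemma card_groupProfile_fixed [Fintype ι] : #{v | groupProfile e c v = v} = Fintype.card ι := by
  calc #{v | groupProfile e c v = v} = #(univ ×ˢ {c} : Finset (ι × κ)) :=
        card_equiv e (by
          simp only [mem_filter, mem_univ, true_and, mem_product, mem_singleton,
            groupProfile_eq_iff, implies_true])
    _ = Fintype.card ι := by simp

lemma card_groupProfile_followers [Fintype κ] [DecidableEq κ] {v : V}
    (hv : groupProfile e c v = v) :
    #{w | w ≠ v ∧ groupProfile e c w = v} = Fintype.card κ - 1 := by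
  rw [groupProfile_eq_iff, and_iff_right rfl] at hv
  calc #{w | w ≠ v ∧ groupProfile e c w = v}
        = #({(e v).1} ×ˢ univ.erase c : Finset (ι × κ)) := by
          refine card_equiv e fun w => ?_
          simp only [mem_filter, mem_univ, true_and, mem_product, mem_singleton, mem_erase,
            groupProfile_eq_iff, hv, and_true, ← e.apply_eq_iff_eq.not, Prod.ext_iff]
          tauto
    _ = Fintype.card κ - 1 := by simp

end GroupProfile

theorem sggac_poa_lower_complete_general (m ξ : ℕ) (hm : 1 ≤ m)
    (b p a : ℚ) (hap : a < p) (hpb : p < b)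
    (hξ2 : p < a * (ξ + 1)) :
    ∃ s : Fin (m * (ξ + 1)) → Fin (m * (ξ + 1)),
      (∀ i, (⊤ : SimpleGraph (Fin (m * (ξ + 1)))).edist i (s i) ≤ (1 : ℕ∞)) ∧
      (∀ i t, (⊤ : SimpleGraph (Fin (m * (ξ + 1)))).edist i t ≤ (1 : ℕ∞) →
        utilAC (⊤ : SimpleGraph (Fin (m * (ξ + 1)))) 1 b p a (Function.update s i t) i ≤
          utilAC (⊤ : SimpleGraph (Fin (m * (ξ + 1)))) 1 b p a s i) ∧
      (Finset.univ.filter (fun i => s i = i)).card = m ∧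
      (∀ i, s i = i → (Finset.univ.filter (fun j => j ≠ i ∧ s j = i)).card = ξ) ∧
      (∃ s' : Fin (m * (ξ + 1)) → Fin (m * (ξ + 1)),
        (∀ i, (⊤ : SimpleGraph (Fin (m * (ξ + 1)))).edist i (s' i) ≤ (1 : ℕ∞)) ∧
        (∀ i, s' (s' i) = s' i) ∧
        (Finset.univ.filter (fun i => s' i = i)).card = 1) := by
  set e : Fin (m * (ξ + 1)) ≃ Fin m × Fin (ξ + 1) := finProdFinEquiv.symm
  have hfollowers : ∀ v, groupProfile e 0 v = v →
      #{w | w ≠ v ∧ groupProfile e 0 w = v} = ξ := fun v hv => by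
    simpa using card_groupProfile_followers e 0 hv
  have hn : 0 < m * (ξ + 1) := by positivity
  refine ⟨groupProfile e 0, fun _ => SimpleGraph.edist_top_le_one _ _,
    fun i t _ => utilAC_update_le_of_idem _ _ b p a (groupProfile_idem e 0) hfollowers
      hap.le (hap.trans hpb).le (by exact_mod_cast hξ2.le) i t,
    by simpa using card_groupProfile_fixed e 0, hfollowers,
    fun _ => ⟨0, hn⟩, fun _ => SimpleGraph.edist_top_le_one _ _, fun _ => rfl, ?_⟩
  simp [Finset.filter_eq]

/-- On the complete graph with `n = m(ξ+1)` vertices (hop parameter `k = 1`),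
there is a Nash equilibrium of the SGG-AC with exactly `m` buyers, each with
exactly `ξ` followers, while there is also a feasible profile with a single
buyer followed by everyone (minimum social cost `p`). Hence PoA `≥ n/(ξ+1)`. -/
theorem sggac_poa_lower_complete (m ξ : ℕ) (hm : 1 ≤ m) (hξ : 1 ≤ ξ)
    (b p a : ℚ) (ha : 0 < a) (hap : a < p) (hpb : p < b)
    (hξ1 : a * ξ < p) (hξ2 : p < a * (ξ + 1)) :
    ∃ s : Fin (m * (ξ + 1)) → Fin (m * (ξ + 1)),
      (∀ i, (⊤ : SimpleGraph (Fin (m * (ξ + 1)))).edist i (s i) ≤ (1 : ℕ∞)) ∧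
      (∀ i t, (⊤ : SimpleGraph (Fin (m * (ξ + 1)))).edist i t ≤ (1 : ℕ∞) →
        utilAC (⊤ : SimpleGraph (Fin (m * (ξ + 1)))) 1 b p a (Function.update s i t) i ≤
          utilAC (⊤ : SimpleGraph (Fin (m * (ξ + 1)))) 1 b p a s i) ∧
      (Finset.univ.filter (fun i => s i = i)).card = m ∧
      (∀ i, s i = i → (Finset.univ.filter (fun j => j ≠ i ∧ s j = i)).card = ξ) ∧
      (∃ s' : Fin (m * (ξ + 1)) → Fin (m * (ξ + 1)),
        (∀ i, (⊤ : SimpleGraph (Fin (m * (ξ + 1)))).edist i (s' i) ≤ (1 : ℕ∞)) ∧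
        (∀ i, s' (s' i) = s' i) ∧
        (Finset.univ.filter (fun i => s' i = i)).card = 1) :=
  sggac_poa_lower_complete_general m ξ hm b p a hap hpb hξ2
end

section
/- In any Nash equilibrium of the SGG-AC on a finite graph, any two 'poor owners' (buyers with fewer than ξ followers) are at distance at least k+1 from each other. -/
/-! A poor owner `i` with a buyer `j` within distance `k` would gain by renting from `j`:
renting yields `b - a`, while buying yields `b - p + a |F_i| ≤ b - p + a (ξ - 1) < b - a`.
This contradicts the Nash condition, so no buyer, in particular no other poor owner,
lies within distance `k` of `i`. -/

open Finset

section
variable {V : Type} [Fintype V] (G : SimpleGraph V) (k : ℕ) (b p a : ℚ)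

theorem utilAC_of_self [DecidableEq V] {s : V → V} {i : V} (hi : s i = i) :
    utilAC G k b p a s i = b - p + a * #(univ.filter fun j => j ≠ i ∧ s j = i) := by
  unfold utilAC
  rw [if_pos hi]
  congr 4
  exact filter_congr_decidable _ _ _

theorem utilAC_update_of_ne_of_self [DecidableEq V] {s : V → V} {i j : V} (hij : i ≠ j)
    (hj : s j = j) :
    utilAC G k b p a (Function.update s i j) i = b - a := by
  unfold utilAC
  rw [Function.update_self, if_neg hij.symm, Function.update_of_ne hij.symm, hj, if_pos rfl]

theorem utilAC_lt_update_of_card_lt [DecidableEq V] {ξ : ℕ} (ha : 0 < a) (hξ : a * ξ < p)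
    {s : V → V} {i j : V} (hij : i ≠ j) (hi : s i = i) (hj : s j = j)
    (hcard : #(univ.filter fun l => l ≠ i ∧ s l = i) < ξ) :
    utilAC G k b p a s i < utilAC G k b p a (Function.update s i j) i := by
  rw [utilAC_of_self G k b p a hi, utilAC_update_of_ne_of_self G k b p a hij hj]
  have hcard_succ : (#(univ.filter fun l => l ≠ i ∧ s l = i) : ℚ) + 1 ≤ ξ := by
    exact_mod_cast hcard
  nlinarith

end

theorem sggac_poor_owners_far_general {V : Type} [Fintype V] [DecidableEq V]
    (G : SimpleGraph V) (k ξ : ℕ) (b p a : ℚ)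
    (ha : 0 < a)
    (hξ1 : a * ξ < p)
    (s : V → V)
    (hNE : ∀ i t, G.edist i t ≤ (k : ℕ∞) →
      utilAC G k b p a (Function.update s i t) i ≤ utilAC G k b p a s i) :
    ∀ i j : V, i ≠ j → s i = i → s j = j →
      (Finset.univ.filter (fun l => l ≠ i ∧ s l = i)).card < ξ →
      (Finset.univ.filter (fun l => l ≠ j ∧ s l = j)).card < ξ →
      (k : ℕ∞) + 1 ≤ G.edist i j := by
  intro i j hij hi hj hpoor_i _
  by_contra hnear
  have hdist : G.edist i j ≤ k := by
    rwa [not_le, ENat.lt_add_one_iff (ENat.natCast_ne_top k)] at hnear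
  exact (hNE i j hdist).not_gt (utilAC_lt_update_of_card_lt G k b p a ha hξ1 hij hi hj hpoor_i)

/-- In any Nash equilibrium of the SGG-AC, any two poor owners (buyers with
fewer than `ξ` followers) are at distance at least `k + 1`. -/
theorem sggac_poor_owners_far {V : Type} [Fintype V] [DecidableEq V]
    (G : SimpleGraph V) (k ξ : ℕ) (hk : 1 ≤ k) (b p a : ℚ)
    (ha : 0 < a) (hap : a < p) (hpb : p < b)
    (hξ1 : a * ξ < p) (hξ2 : p < a * (ξ + 1))
    (s : V → V) (hvalid : ∀ i, G.edist i (s i) ≤ (k : ℕ∞))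
    (hNE : ∀ i t, G.edist i t ≤ (k : ℕ∞) →
      utilAC G k b p a (Function.update s i t) i ≤ utilAC G k b p a s i) :
    ∀ i j : V, i ≠ j → s i = i → s j = j →
      (Finset.univ.filter (fun l => l ≠ i ∧ s l = i)).card < ξ →
      (Finset.univ.filter (fun l => l ≠ j ∧ s l = j)).card < ξ →
      (k : ℕ∞) + 1 ≤ G.edist i j :=
  sggac_poor_owners_far_general G k ξ b p a ha hξ1 s hNE
end

section
/- The price of anarchy of the SGG-AC is at most O(n/k + n/ξ): in any Nash equilibrium of the SGG-AC on a graph with n vertices and c components, the number of buyers is at most n/⌊k/2⌋ + n/(ξ+1) + c, while the optimal number of buyers is at least c (for k ≥ 2). -/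
open Finset

theorem Finset.card_mul_le_card_of_pairwiseDisjoint {ι α : Type*} {s : Finset ι}
    {f : ι → Finset α} {t : Finset α} {m : ℕ} (hs : (s : Set ι).PairwiseDisjoint f)
    (hm : ∀ i ∈ s, m ≤ #(f i)) (ht : ∀ i ∈ s, f i ⊆ t) : #s * m ≤ #t := by
  classical
  calc #s * m ≤ ∑ i ∈ s, #(f i) := by simpa using s.card_nsmul_le_sum _ _ hm
    _ = #(s.biUnion f) := (card_biUnion hs).symm
    _ ≤ #t := card_le_card (biUnion_subset.mpr ht)

namespace SimpleGraph

variable {V : Type*} {G : SimpleGraph V} {u v w : V}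

theorem Walk.dist_getVert_of_length_eq_dist {p : G.Walk u v} (hp : p.length = G.dist u v)
    {t : ℕ} (ht : t ≤ p.length) : G.dist u (p.getVert t) = t := by
  rw [← length_eq_dist_of_subwalk hp (p.isSubwalk_take t), take_length]
  omega

theorem Walk.edist_getVert_of_length_eq_dist {p : G.Walk u v} (hp : p.length = G.dist u v)
    {t : ℕ} (ht : t ≤ p.length) : G.edist u (p.getVert t) = t := by
  rw [← (p.take t).reachable.coe_dist_eq_edist, p.dist_getVert_of_length_eq_dist hp ht]

variable [Fintype V]

theorem add_one_le_card_filter_edist_le (hr : G.Reachable u w) {r : ℕ}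
    (hw : (r : ℕ∞) < G.edist u w) : r + 1 ≤ #{v | G.edist u v ≤ r} := by
  obtain ⟨p, hp⟩ := hr.exists_walk_length_eq_dist
  have hrp : r < p.length := by
    rw [← hr.coe_dist_eq_edist, ← hp] at hw
    exact_mod_cast hw
  have hdist : ∀ t ≤ r, G.edist u (p.getVert t) = t := fun t ht =>
    p.edist_getVert_of_length_eq_dist hp (by omega)
  simpa using card_le_card_of_injOn (s := range (r + 1)) p.getVert
    (fun t ht => by simp_all)
    (fun t ht t' ht' h => by
      simp only [coe_range, Set.mem_Iio] at ht ht'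
      exact_mod_cast (hdist t (by omega)).symm.trans (h ▸ hdist t' (by omega)))

open Classical in
theorem card_mul_le_card_connectedComponent_add {S : Finset V} {r : ℕ} {C : G.ConnectedComponent}
    (hSC : ∀ x ∈ S, G.connectedComponentMk x = C)
    (hS : ∀ x ∈ S, ∀ y ∈ S, x ≠ y → ((2 * r : ℕ) : ℕ∞) < G.edist x y) :
    #S * r ≤ #{v | G.connectedComponentMk v = C} + r := by
  rcases le_or_gt #S 1 with hS1 | hS1
  · nlinarith
  let ball : V → Finset V := fun x => {v | G.edist x v ≤ r}
  have hball : ∀ x ∈ S, r + 1 ≤ #(ball x) := by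
    intro x hx
    obtain ⟨y, hy, hyx⟩ := exists_mem_ne hS1 x
    refine add_one_le_card_filter_edist_le (ConnectedComponent.exact ((hSC x hx).trans
      (hSC y hy).symm)) (lt_of_le_of_lt ?_ (hS x hx y hy hyx.symm))
    exact_mod_cast (by omega : r ≤ 2 * r)
  have hdisj : (S : Set V).PairwiseDisjoint ball := by
    intro x hx y hy hxy
    refine Finset.disjoint_left.mpr fun v hvx hvy => ?_
    refine (hS x hx y hy hxy).not_ge ?_
    simp only [ball, mem_filter, mem_univ, true_and] at hvx hvy
    calc G.edist x y ≤ G.edist x v + G.edist v y := G.edist_triangle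
      _ ≤ r + r := add_le_add hvx (G.edist_comm ▸ hvy)
      _ = ((2 * r : ℕ) : ℕ∞) := by push_cast; ring
  have hsub : ∀ x ∈ S, ball x ⊆ ({v | G.connectedComponentMk v = C} : Finset V) := by
    intro x hx v hv
    simp only [ball, mem_filter, mem_univ, true_and] at hv ⊢
    rw [← hSC x hx]
    exact (ConnectedComponent.sound (reachable_of_edist_ne_top
      (ne_top_of_le_ne_top (ENat.natCast_ne_top r) hv))).symm
  have := card_mul_le_card_of_pairwiseDisjoint hdisj hball hsub
  nlinarith

theorem card_mul_le_card_add_mul_card_connectedComponent {S : Finset V} {r : ℕ}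
    (hS : ∀ x ∈ S, ∀ y ∈ S, x ≠ y → ((2 * r : ℕ) : ℕ∞) < G.edist x y) :
    #S * r ≤ Fintype.card V + r * Nat.card G.ConnectedComponent := by
  classical
  have := Fintype.ofFinite G.ConnectedComponent
  rw [card_eq_sum_card_fiberwise (fun x _ => mem_univ (G.connectedComponentMk x)),
    ← card_univ, card_eq_sum_card_fiberwise (fun x _ => mem_univ (G.connectedComponentMk x)),
    Nat.card_eq_fintype_card, ← card_univ, sum_mul, mul_comm, ← smul_eq_mul, ← sum_const,
    ← sum_add_distrib]
  refine sum_le_sum fun C _ => card_mul_le_card_connectedComponent_add (by simp)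
    fun x hx y hy => hS x (mem_filter.mp hx).1 y (mem_filter.mp hy).1

theorem card_connectedComponent_le_card {D : Finset V} (hD : ∀ v, ∃ d ∈ D, G.Reachable v d) :
    Nat.card G.ConnectedComponent ≤ #D := by
  refine (Nat.card_le_card_of_surjective (fun d : D => G.connectedComponentMk d) ?_).trans
    (Nat.card_eq_finsetCard D).le
  intro C
  obtain ⟨d, hd, hvd⟩ := hD C.out
  exact ⟨⟨d, hd⟩, (ConnectedComponent.sound hvd).symm.trans C.out_eq⟩

end SimpleGraph

section SGGAC

variable {V : Type} [Fintype V] [DecidableEq V]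

def followers (s : V → V) (i : V) : Finset V := {j | j ≠ i ∧ s j = i}

theorem card_followers_add_one {s : V → V} {i : V} (hi : s i = i) :
    #(followers s i) + 1 = #{j | s j = i} := by
  rw [← card_insert_of_notMem (a := i) (by simp [followers])]
  congr 1
  ext j
  by_cases hj : j = i <;> simp [followers, hj, hi]

theorem card_mul_add_one_le_card_of_le_card_followers {s : V → V} {R : Finset V} {ξ : ℕ}
    (hR : ∀ i ∈ R, s i = i ∧ ξ ≤ #(followers s i)) : #R * (ξ + 1) ≤ Fintype.card V :=
  card_mul_le_card_of_pairwiseDisjoint (Set.pairwiseDisjoint_filter s _ univ)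
    (fun i hi => by rw [← card_followers_add_one (hR i hi).1]; exact Nat.succ_le_succ (hR i hi).2)
    (fun _ _ => subset_univ _)

variable (G : SimpleGraph V) (k : ℕ) (b p a : ℚ) {s : V → V} {i j : V}

theorem utilAC_of_buys (hi : s i = i) : utilAC G k b p a s i = b - p + a * #(followers s i) := by
  rw [utilAC, if_pos hi, followers]
  congr

theorem utilAC_update_of_buys (hj : s j = j) (hji : j ≠ i) :
    utilAC G k b p a (Function.update s i j) i = b - a := by
  rw [utilAC, Function.update_self, if_neg hji, Function.update_of_ne hji, hj, if_pos rfl]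

theorem le_card_followers_of_nash {ξ : ℕ} (ha : 0 < a) (hξ : a * ξ < p)
    (hNE : ∀ i t, G.edist i t ≤ (k : ℕ∞) →
      utilAC G k b p a (Function.update s i t) i ≤ utilAC G k b p a s i)
    (hi : s i = i) (hj : s j = j) (hji : j ≠ i) (hij : G.edist i j ≤ k) :
    ξ ≤ #(followers s i) := by
  have hdev := hNE i j hij
  rw [utilAC_update_of_buys G k b p a hj hji, utilAC_of_buys G k b p a hi] at hdev
  by_contra! hlt
  have : ((#(followers s i) : ℕ) : ℚ) + 1 ≤ ξ := by exact_mod_cast hlt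
  nlinarith

end SGGAC

theorem sggac_poa_upper_general {V : Type} [Fintype V] [DecidableEq V]
    (G : SimpleGraph V) (k ξ : ℕ) (hk : 2 ≤ k) (b p a : ℚ)
    (ha : 0 < a) (hξ1 : a * ξ < p) (s : V → V)
    (hNE : ∀ i t, G.edist i t ≤ (k : ℕ∞) →
      utilAC G k b p a (Function.update s i t) i ≤ utilAC G k b p a s i) :
    ((Finset.univ.filter (fun i => s i = i)).card : ℚ) ≤
        (Fintype.card V : ℚ) / ((k / 2 : ℕ) : ℚ)
          + (Fintype.card V : ℚ) / ((ξ : ℚ) + 1)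
          + (Nat.card G.ConnectedComponent : ℚ) ∧
      (∀ D : Finset V, (∀ v, ∃ d ∈ D, G.edist v d ≤ (k : ℕ∞)) →
        Nat.card G.ConnectedComponent ≤ D.card) := by
  refine ⟨?_, fun D hD => G.card_connectedComponent_le_card fun v => ?_⟩
  swap
  · obtain ⟨d, hd, hvd⟩ := hD v
    exact ⟨d, hd, G.reachable_of_edist_ne_top (ne_top_of_le_ne_top (ENat.natCast_ne_top k) hvd)⟩
  set B : Finset V := {i | s i = i}
  set R := B.filter (fun i => ξ ≤ #(followers s i))
  set P := B.filter (fun i => ¬ ξ ≤ #(followers s i))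
  have hrich : #R * (ξ + 1) ≤ Fintype.card V :=
    card_mul_add_one_le_card_of_le_card_followers fun i hi => by
      simpa [R, B] using hi
  have hpoor : #P * (k / 2) ≤ Fintype.card V + k / 2 * Nat.card G.ConnectedComponent := by
    refine G.card_mul_le_card_add_mul_card_connectedComponent fun i hi j hj hij => ?_
    simp only [P, B, mem_filter, mem_univ, true_and] at hi hj
    by_contra! hclose
    exact hi.2 (le_card_followers_of_nash G k b p a ha hξ1 hNE hi.1 hj.1 (Ne.symm hij)
      (hclose.trans (by exact_mod_cast Nat.mul_div_le k 2)))
  have hk2 : (0 : ℚ) < (k / 2 : ℕ) := by exact_mod_cast Nat.div_pos hk two_pos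
  have hRq : (#R : ℚ) ≤ Fintype.card V / ((ξ : ℚ) + 1) :=
    (le_div_iff₀ (by positivity)).mpr (by exact_mod_cast hrich)
  have hPq : (#P : ℚ) ≤ Fintype.card V / (k / 2 : ℕ) + Nat.card G.ConnectedComponent := by
    rw [div_add' _ _ _ hk2.ne', le_div_iff₀ hk2]
    exact_mod_cast hpoor.trans_eq (by ring)
  rw [← card_filter_add_card_filter_not (s := B) (fun i => ξ ≤ #(followers s i))]
  push_cast
  linarith

/-- PoA upper bound for the SGG-AC: in any Nash equilibrium, the number of
buyers is at most `n/⌊k/2⌋ + n/(ξ+1) + c`, while any `k`-dominating set (in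
particular an optimal set of buyers) has size at least `c`, the number of
connected components. -/
theorem sggac_poa_upper {V : Type} [Fintype V] [DecidableEq V]
    (G : SimpleGraph V) (k ξ : ℕ) (hk : 2 ≤ k) (hξ : 1 ≤ ξ) (b p a : ℚ)
    (ha : 0 < a) (hap : a < p) (hpb : p < b)
    (hξ1 : a * ξ < p) (hξ2 : p < a * (ξ + 1))
    (s : V → V) (hvalid : ∀ i, G.edist i (s i) ≤ (k : ℕ∞))
    (hNE : ∀ i t, G.edist i t ≤ (k : ℕ∞) →
      utilAC G k b p a (Function.update s i t) i ≤ utilAC G k b p a s i) :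
    ((Finset.univ.filter (fun i => s i = i)).card : ℚ) ≤
        (Fintype.card V : ℚ) / ((k / 2 : ℕ) : ℚ)
          + (Fintype.card V : ℚ) / ((ξ : ℚ) + 1)
          + (Nat.card G.ConnectedComponent : ℚ) ∧
      (∀ D : Finset V, (∀ v, ∃ d ∈ D, G.edist v d ≤ (k : ℕ∞)) →
        Nat.card G.ConnectedComponent ≤ D.card) :=
  sggac_poa_upper_general G k ξ hk b p a ha hξ1 s hNE
end

section
/- For any integers k, m ≥ 1, in the 'spider' graph consisting of a center vertex attached to m arms, each a path on k vertices, there is a k-dominating set of size 1 (the center), but the set consisting of the m far endpoints of the arms is a k-independent dominating set of size m. -/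
/-!
Walking along an arm shows that every vertex is within distance `k` of the center and of the far
endpoint of its own arm. For the lower bound, the distance to the far endpoint of arm `j` is
realised by the potential that is `k - 1 - i` at position `i` of arm `j`, `k` at the center and
`k + 1 + i` at position `i` of any other arm; it changes by at most one along an edge, so far
endpoints of different arms are at distance at least `2k ≥ k + 1`.
-/

/-- The spider graph `S_{k,m}`: a center (`Sum.inl ()`) plus `m` arms, each a
path on `k` vertices, whose `0`-th vertex is adjacent to the center. -/
def spiderGraph (k m : ℕ) : SimpleGraph (Unit ⊕ Fin m × Fin k) :=
  SimpleGraph.fromRel (fun x y =>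
    (∃ j i, x = Sum.inl () ∧ y = Sum.inr (j, i) ∧ (i : ℕ) = 0) ∨
    (∃ j i i', x = Sum.inr (j, i) ∧ y = Sum.inr (j, i') ∧
      (i' : ℕ) = (i : ℕ) + 1))

namespace SimpleGraph

variable {V : Type*} {G : SimpleGraph V}

lemma Walk.apply_le_apply_add_length {f : V → ℕ} (hf : ∀ ⦃u v⦄, G.Adj u v → f u ≤ f v + 1)
    {u v : V} (p : G.Walk u v) : f u ≤ f v + p.length := by
  induction p with
  | nil => simp
  | cons h _ ih =>
    rw [Walk.length_cons]
    have := hf h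
    omega

lemma apply_le_apply_add_edist {f : V → ℕ} (hf : ∀ ⦃u v⦄, G.Adj u v → f u ≤ f v + 1)
    (u v : V) : (f u : ℕ∞) ≤ f v + G.edist u v := by
  by_cases huv : G.Reachable u v
  · obtain ⟨p, hp⟩ := huv.exists_walk_length_eq_edist
    rw [← hp]
    exact_mod_cast p.apply_le_apply_add_length hf
  · simp [edist_eq_top_of_not_reachable huv]

lemma edist_le_of_adj_succ {f : ℕ → V} {a b : ℕ} (hab : a ≤ b)
    (hf : ∀ i, a ≤ i → i < b → G.Adj (f i) (f (i + 1))) :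
    G.edist (f a) (f b) ≤ (b - a : ℕ) := by
  induction b, hab using Nat.le_induction with
  | base => simp
  | succ b hab ih =>
    calc G.edist (f a) (f (b + 1))
        ≤ G.edist (f a) (f b) + G.edist (f b) (f (b + 1)) := G.edist_triangle
      _ ≤ (b - a : ℕ) + 1 :=
          add_le_add (ih fun i hai hib ↦ hf i hai (by omega))
            (edist_eq_one_iff_adj.mpr (hf b hab (by omega))).le
      _ = (b + 1 - a : ℕ) := by norm_cast; omega

end SimpleGraph

open SimpleGraph

variable {k m : ℕ}

/-- Arm `j` traversed from the center (`t = 0`) to its far endpoint (`t = k`); past the end the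
value is a junk center. -/
def spiderArm (k : ℕ) (j : Fin m) : ℕ → Unit ⊕ Fin m × Fin k
  | 0 => Sum.inl ()
  | t + 1 => if h : t < k then Sum.inr (j, ⟨t, h⟩) else Sum.inl ()

lemma spiderArm_far (hk : 1 ≤ k) (j : Fin m) :
    spiderArm k j k = Sum.inr (j, ⟨k - 1, by omega⟩) := by
  obtain ⟨k, rfl⟩ := Nat.exists_eq_add_of_le' hk
  simp [spiderArm]

lemma exists_spiderArm_eq (hm : 1 ≤ m) (v : Unit ⊕ Fin m × Fin k) :
    ∃ j, ∃ t ≤ k, spiderArm k j t = v := by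
  rcases v with ⟨⟩ | ⟨j, i⟩
  · exact ⟨⟨0, hm⟩, 0, Nat.zero_le k, rfl⟩
  · exact ⟨j, i + 1, i.isLt, by simp [spiderArm]⟩

lemma spiderGraph_adj_spiderArm (j : Fin m) {t : ℕ} (ht : t < k) :
    (spiderGraph k m).Adj (spiderArm k j t) (spiderArm k j (t + 1)) := by
  rcases t with _ | t
  · simp [spiderGraph, spiderArm, ht]
  · simp [spiderGraph, spiderArm, ht, Nat.lt_of_succ_lt ht]

lemma edist_spiderArm_le (j : Fin m) {a b : ℕ} (hab : a ≤ b) (hb : b ≤ k) :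
    (spiderGraph k m).edist (spiderArm k j a) (spiderArm k j b) ≤ (b - a : ℕ) :=
  edist_le_of_adj_succ hab fun _ _ hib ↦ spiderGraph_adj_spiderArm j (by omega)

def armPotential (k : ℕ) (j : Fin m) : Unit ⊕ Fin m × Fin k → ℕ
  | Sum.inl _ => k
  | Sum.inr (j', i) => if j' = j then k - 1 - i else k + 1 + i

lemma armPotential_le_of_adj (j : Fin m) ⦃u v : Unit ⊕ Fin m × Fin k⦄
    (h : (spiderGraph k m).Adj u v) : armPotential k j u ≤ armPotential k j v + 1 := by
  obtain ⟨-, h | h⟩ := h <;>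
  · rcases h with ⟨j', i, rfl, rfl, hi⟩ | ⟨j', i, i', rfl, rfl, hi⟩ <;>
    · simp only [armPotential]
      split_ifs <;> omega

lemma two_mul_le_edist_spiderArm_far (hk : 1 ≤ k) {j j' : Fin m} (hjj' : j ≠ j') :
    ((2 * k : ℕ) : ℕ∞) ≤ (spiderGraph k m).edist (spiderArm k j k) (spiderArm k j' k) := by
  have key := apply_le_apply_add_edist (armPotential_le_of_adj j') (spiderArm k j k)
    (spiderArm k j' k)
  have hfar : armPotential k j' (spiderArm k j k) = 2 * k := by
    simp only [spiderArm_far hk, armPotential, if_neg hjj']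
    omega
  have hnear : armPotential k j' (spiderArm k j' k) = 0 := by
    simp [spiderArm_far hk, armPotential]
  simpa [hfar, hnear] using key

/-- In the spider `S_{k,m}`, the center alone is a `k`-dominating set of size
`1`, while the `m` far endpoints of the arms form a `k`-independent dominating
set of size `m`. -/
theorem spider_pos_lower (k m : ℕ) (hk : 1 ≤ k) (hm : 1 ≤ m) :
    (∀ v, ∃ d ∈ ({Sum.inl ()} : Finset (Unit ⊕ Fin m × Fin k)),
        (spiderGraph k m).edist v d ≤ (k : ℕ∞)) ∧
    ((Finset.univ.image (fun j : Fin m =>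
        (Sum.inr (j, ⟨k - 1, by omega⟩) : Unit ⊕ Fin m × Fin k))).card = m ∧
      (∀ v, ∃ d ∈ Finset.univ.image (fun j : Fin m =>
          (Sum.inr (j, ⟨k - 1, by omega⟩) : Unit ⊕ Fin m × Fin k)),
        (spiderGraph k m).edist v d ≤ (k : ℕ∞)) ∧
      (∀ d ∈ Finset.univ.image (fun j : Fin m =>
            (Sum.inr (j, ⟨k - 1, by omega⟩) : Unit ⊕ Fin m × Fin k)),
        ∀ d' ∈ Finset.univ.image (fun j : Fin m =>
            (Sum.inr (j, ⟨k - 1, by omega⟩) : Unit ⊕ Fin m × Fin k)),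
          d ≠ d' → (k : ℕ∞) + 1 ≤ (spiderGraph k m).edist d d')) := by
  refine ⟨fun v ↦ ?_, ?_, fun v ↦ ?_, ?_⟩
  · obtain ⟨j, t, ht, rfl⟩ := exists_spiderArm_eq hm v
    refine ⟨_, Finset.mem_singleton_self _, ?_⟩
    rw [edist_comm]
    exact (edist_spiderArm_le j (Nat.zero_le t) ht).trans (by norm_cast)
  · rw [Finset.card_image_of_injective _ fun _ _ h ↦ by simpa using h, Finset.card_univ,
      Fintype.card_fin]
  · obtain ⟨j, t, ht, rfl⟩ := exists_spiderArm_eq hm v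
    refine ⟨_, Finset.mem_image_of_mem _ (Finset.mem_univ j), ?_⟩
    rw [← spiderArm_far hk]
    exact (edist_spiderArm_le j ht le_rfl).trans (by norm_cast; omega)
  · simp only [Finset.mem_image, Finset.mem_univ, true_and]
    rintro _ ⟨j, rfl⟩ _ ⟨j', rfl⟩ hne
    have hjj' : j ≠ j' := fun h ↦ hne (h ▸ rfl)
    rw [← spiderArm_far hk, ← spiderArm_far hk]
    exact le_trans (by norm_cast; omega) (two_mul_le_edist_spiderArm_far hk hjj')
end

section
/- For every finite graph, the best-response dynamics of the SGG starting from the all-zero profile (no one buys), in which vertices in a fixed order repeatedly switch to a best response, terminates in a Nash equilibrium after at most three full passes over the vertices. -/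
open Classical in
/-- Best response of vertex `i` in the SGG: buy iff no other vertex within
distance `k` buys. -/
noncomputable def brSGG {V : Type} (G : SimpleGraph V) (k : ℕ)
    (s : V → Bool) (i : V) : Bool :=
  if ∃ j, j ≠ i ∧ s j ∧ G.edist i j ≤ (k : ℕ∞) then false else true

/-- One pass of best-response dynamics: each vertex, in the order given by the
list `l`, updates its strategy to a best response. -/
noncomputable def passSGG {V : Type} [DecidableEq V] (G : SimpleGraph V)
    (k : ℕ) (l : List V) (s : V → Bool) : V → Bool :=
  l.foldl (fun t i => Function.update t i (brSGG G k t i)) s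

/-!
From the all-zero profile the buyers stay `k`-independent throughout a pass: a vertex starts
buying only when no other buyer is within distance `k`. Consequently no buyer ever stops buying,
so a vertex that is within distance `k` of a buyer (possibly itself) right after its own update
stays so until the end of the pass. After the first pass the buyers therefore form a
`k`-independent `k`-dominating set, which is exactly a profile where every vertex plays a best
response; the next two passes change nothing, and such a profile is a Nash equilibrium since
`0 < p < b`.
-/

namespace SGG

variable {V : Type} (G : SimpleGraph V) (k : ℕ)

def IndepBuyers (s : V → Bool) : Prop :=
  ∀ ⦃i j⦄, i ≠ j → s i → s j → (k : ℕ∞) < G.edist i j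

def Dominated (s : V → Bool) (i : V) : Prop :=
  ∃ j, s j ∧ G.edist i j ≤ (k : ℕ∞)

variable {G k}

theorem Dominated.mono {s t : V → Bool} (hst : s ≤ t) {i : V} (h : Dominated G k s i) :
    Dominated G k t i :=
  let ⟨j, hj, hij⟩ := h
  ⟨j, Bool.le_iff_imp.mp (hst j) hj, hij⟩

theorem brSGG_eq_true_iff {s : V → Bool} {i : V} :
    brSGG G k s i = true ↔ ∀ j, j ≠ i → s j → (k : ℕ∞) < G.edist i j := by
  simp [brSGG]

theorem brSGG_eq_false_iff {s : V → Bool} {i : V} :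
    brSGG G k s i = false ↔ ∃ j, j ≠ i ∧ s j ∧ G.edist i j ≤ (k : ℕ∞) := by
  simp [brSGG]

theorem IndepBuyers.brSGG_eq_true {s : V → Bool} (hs : IndepBuyers G k s) {i : V}
    (hi : s i) : brSGG G k s i = true :=
  brSGG_eq_true_iff.mpr fun _ hji hj => hs hji.symm hi hj

theorem IndepBuyers.brSGG_eq_self {s : V → Bool} (hs : IndepBuyers G k s) {i : V}
    (hdom : Dominated G k s i) : brSGG G k s i = s i := by
  cases hi : s i with
  | true => exact hs.brSGG_eq_true hi
  | false =>
    obtain ⟨j, hj, hij⟩ := hdom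
    have hji : j ≠ i := by rintro rfl; simp_all
    exact brSGG_eq_false_iff.mpr ⟨j, hji, hj, hij⟩

variable [DecidableEq V]

theorem le_update_brSGG {s : V → Bool} (hs : IndepBuyers G k s) (v : V) :
    s ≤ Function.update s v (brSGG G k s v) := by
  intro j
  rw [Bool.le_iff_imp]
  intro hj
  rcases eq_or_ne j v with rfl | hjv
  · simpa using hs.brSGG_eq_true hj
  · simpa [Function.update_of_ne hjv] using hj

theorem IndepBuyers.update_brSGG {s : V → Bool} (hs : IndepBuyers G k s) (v : V) :
    IndepBuyers G k (Function.update s v (brSGG G k s v)) := by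
  have key : ∀ j, j ≠ v → brSGG G k s v = true → s j → (k : ℕ∞) < G.edist v j :=
    fun j hjv hv hj => brSGG_eq_true_iff.mp hv j hjv hj
  intro i j hij hi hj
  rcases eq_or_ne i v with rfl | hiv
  · simp only [Function.update_self, Function.update_of_ne hij.symm] at hi hj
    exact key j hij.symm hi hj
  rcases eq_or_ne j v with rfl | hjv
  · simp only [Function.update_self, Function.update_of_ne hij] at hi hj
    rw [SimpleGraph.edist_comm]
    exact key i hij hj hi
  · simp only [Function.update_of_ne hiv, Function.update_of_ne hjv] at hi hj
    exact hs hij hi hj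

theorem dominated_update_brSGG (s : V → Bool) (v : V) :
    Dominated G k (Function.update s v (brSGG G k s v)) v := by
  cases hv : brSGG G k s v with
  | true => exact ⟨v, by simp, by simp⟩
  | false =>
    obtain ⟨j, hjv, hj, hvj⟩ := brSGG_eq_false_iff.mp hv
    exact ⟨j, by simpa [Function.update_of_ne hjv] using hj, hvj⟩

theorem passSGG_cons (v : V) (l : List V) (s : V → Bool) :
    passSGG G k (v :: l) s = passSGG G k l (Function.update s v (brSGG G k s v)) :=
  rfl

theorem IndepBuyers.passSGG {s : V → Bool} (hs : IndepBuyers G k s) (l : List V) :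
    IndepBuyers G k (passSGG G k l s) := by
  induction l generalizing s with
  | nil => exact hs
  | cons v l ih => exact ih (hs.update_brSGG v)

theorem le_passSGG {s : V → Bool} (hs : IndepBuyers G k s) (l : List V) :
    s ≤ passSGG G k l s := by
  induction l generalizing s with
  | nil => exact le_rfl
  | cons v l ih => exact (le_update_brSGG hs v).trans (ih (hs.update_brSGG v))

theorem dominated_passSGG {s : V → Bool} (hs : IndepBuyers G k s) {l : List V} {v : V}
    (hv : v ∈ l) : Dominated G k (passSGG G k l s) v := by
  induction l generalizing s with
  | nil => cases hv
  | cons w l ih =>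
    rw [passSGG_cons]
    rcases List.mem_cons.mp hv with rfl | hv
    · exact (dominated_update_brSGG s v).mono (le_passSGG (hs.update_brSGG v) l)
    · exact ih (hs.update_brSGG w) hv

theorem passSGG_eq_self {s : V → Bool} (hs : ∀ i, brSGG G k s i = s i) (l : List V) :
    passSGG G k l s = s := by
  induction l with
  | nil => rfl
  | cons v l ih => rw [passSGG_cons, hs v, Function.update_eq_self, ih]

theorem IndepBuyers.utilSGG_update_le {b p : ℚ} (hp : 0 < p) (hb : p < b) {s : V → Bool}
    (hs : IndepBuyers G k s) {i : V} (hdom : Dominated G k s i) (c : Bool) :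
    utilSGG G k b p (Function.update s i c) i ≤ utilSGG G k b p s i := by
  cases hi : s i with
  | true =>
    have hfar : ¬ Dominated G k (Function.update s i false) i := by
      rintro ⟨j, hj, hij⟩
      rcases eq_or_ne j i with rfl | hji
      · simp at hj
      · rw [Function.update_of_ne hji] at hj
        exact (hs hji.symm hi hj).not_ge hij
    cases c with
    | true => simp [utilSGG, hi]
    | false =>
      simp only [Dominated] at hfar
      simp only [utilSGG, Function.update_self, hi, hfar, Bool.false_eq_true, ↓reduceIte]
      linarith
  | false =>
    cases c with
    | true =>
      simp only [Dominated] at hdom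
      simp only [utilSGG, Function.update_self, hi, hdom, Bool.false_eq_true, ↓reduceIte]
      linarith
    | false => rw [← hi, Function.update_eq_self]

end SGG

theorem sgg_best_response_converges_general {V : Type} [DecidableEq V]
    (G : SimpleGraph V) (k : ℕ) (b p : ℚ) (hp : 0 < p) (hb : p < b)
    (l : List V) (hall : ∀ v : V, v ∈ l) :
    ∀ i : V, ∀ c : Bool,
      utilSGG G k b p
          (Function.update (passSGG G k l (passSGG G k l (passSGG G k l (fun _ => false)))) i c) i ≤
        utilSGG G k b p (passSGG G k l (passSGG G k l (passSGG G k l (fun _ => false)))) i := by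
  intro i c
  set s := passSGG G k l (fun _ => false)
  have hzero : SGG.IndepBuyers G k (fun _ : V => false) := fun _ _ _ h => by simp at h
  have hindep : SGG.IndepBuyers G k s := hzero.passSGG l
  have hdom : ∀ v, SGG.Dominated G k s v := fun v => SGG.dominated_passSGG hzero (hall v)
  have hfix : passSGG G k l s = s :=
    SGG.passSGG_eq_self (fun v => hindep.brSGG_eq_self (hdom v)) l
  rw [hfix, hfix]
  exact hindep.utilSGG_update_le hp hb (hdom i) c

/-- Best-response dynamics of the SGG, starting from the all-zero profile and
sweeping the vertices in a fixed order, reaches a Nash equilibrium after at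
most three full passes. -/
theorem sgg_best_response_converges {V : Type} [Fintype V] [DecidableEq V]
    (G : SimpleGraph V) (k : ℕ) (hk : 1 ≤ k) (b p : ℚ) (hp : 0 < p) (hb : p < b)
    (l : List V) (hnd : l.Nodup) (hall : ∀ v : V, v ∈ l) :
    ∀ i : V, ∀ c : Bool,
      utilSGG G k b p
          (Function.update (passSGG G k l (passSGG G k l (passSGG G k l (fun _ => false)))) i c) i ≤
        utilSGG G k b p (passSGG G k l (passSGG G k l (passSGG G k l (fun _ => false)))) i :=
  sgg_best_response_converges_general G k b p hp hb l hall
end
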